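/- arXiv:1605.03044 — 2 statements merged into one kernel-verified Lean document; each statement's English description precedes it below -/
import Mathlib

section
/- Let ψ be a 2-cocycle on SV = SV[Γ,s] and let f be the linear map associated to ψ by the recursive formulas below; set φ = ψ − ψ_f. Then φ(G_{μ,i}, G_{ν,j}) = 0 for all μ, ν ∈ s+Γ and all i, j ∈ ℤ_{≥0}. -/
noncomputable section

namespace SVSuper

variable (Γ : AddSubgroup ℂ) (s : ℂ)

/-- Basis index type of `SV[Γ,s]`: `Sum.inl (α, i)` stands for `L_{α,i}` (`α ∈ Γ`),
`Sum.inr (μ, j)` stands for `G_{μ,j}` (`μ ∈ s + Γ`). -/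
abbrev Idx : Type := (Γ × ℕ) ⊕ ({μ : ℂ // μ - s ∈ Γ} × ℕ)

/-- The underlying vector space of `SV[Γ,s]`: the free `ℂ`-module on `Idx`. -/
abbrev SV : Type := Idx Γ s →₀ ℂ

/-- The basis vector `L_{α,i}`. -/
def lgen (α : ℂ) (hα : α ∈ Γ) (i : ℕ) : SV Γ s :=
  Finsupp.single (Sum.inl (⟨α, hα⟩, i)) 1

/-- The basis vector `G_{μ,j}`. -/
def ggen (μ : ℂ) (hμ : μ - s ∈ Γ) (j : ℕ) : SV Γ s :=
  Finsupp.single (Sum.inr (⟨μ, hμ⟩, j)) 1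

theorem memLG {α μ : ℂ} (hα : α ∈ Γ) (hμ : μ - s ∈ Γ) : α + μ - s ∈ Γ := by
  have h : α + μ - s = α + (μ - s) := by ring
  rw [h]; exact add_mem hα hμ

theorem memGG (hs : 2 * s ∈ Γ) {μ ν : ℂ} (hμ : μ - s ∈ Γ) (hν : ν - s ∈ Γ) :
    μ + ν ∈ Γ := by
  have h : μ + ν = (μ - s) + (ν - s) + 2 * s := by ring
  rw [h]; exact add_mem (add_mem hμ hν) hs

/-- The bracket on basis vectors (any symbol with second index `-1` is interpreted as `0`;
here this is automatic since the corresponding coefficient vanishes when `i = j = 0`). -/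
def bk (hs : 2 * s ∈ Γ) : Idx Γ s → Idx Γ s → SV Γ s
  | Sum.inl (⟨α, hα⟩, i), Sum.inl (⟨β, hβ⟩, j) =>
      (β - α) • lgen Γ s (α + β) (add_mem hα hβ) (i + j)
        + ((j : ℂ) - (i : ℂ)) • lgen Γ s (α + β) (add_mem hα hβ) (i + j - 1)
  | Sum.inl (⟨α, hα⟩, i), Sum.inr (⟨μ, hμ⟩, j) =>
      (μ - α / 2) • ggen Γ s (α + μ) (memLG Γ s hα hμ) (i + j)
        + ((j : ℂ) - (i : ℂ) / 2) • ggen Γ s (α + μ) (memLG Γ s hα hμ) (i + j - 1)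
  | Sum.inr (⟨μ, hμ⟩, i), Sum.inl (⟨α, hα⟩, j) =>
      -((μ - α / 2) • ggen Γ s (α + μ) (memLG Γ s hα hμ) (j + i)
        + ((i : ℂ) - (j : ℂ) / 2) • ggen Γ s (α + μ) (memLG Γ s hα hμ) (j + i - 1))
  | Sum.inr (⟨μ, hμ⟩, i), Sum.inr (⟨ν, hν⟩, j) =>
      (2 : ℂ) • lgen Γ s (μ + ν) (memGG Γ s hs hμ hν) (i + j)

/-- The bilinear bracket of `SV[Γ,s]`. -/
def bkt (hs : 2 * s ∈ Γ) (x y : SV Γ s) : SV Γ s :=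
  x.sum fun a ca => y.sum fun b cb => (ca * cb) • bk Γ s hs a b

/-- `x` lies in the even part `SV_0̄` (the span of the `L_{α,i}`). -/
def IsEvenElt (x : SV Γ s) : Prop := ∀ b, x (Sum.inr b) = 0

/-- `x` lies in the odd part `SV_1̄` (the span of the `G_{μ,j}`). -/
def IsOddElt (x : SV Γ s) : Prop := ∀ a, x (Sum.inl a) = 0

/-- `x` is `ℤ₂`-homogeneous. -/
def IsHomog (x : SV Γ s) : Prop := IsEvenElt Γ s x ∨ IsOddElt Γ s x

/-- `x` lies in the degree-`γ` component `SV_γ = span{L_{γ,i}, G_{γ,i}}` of the `Ω`-grading. -/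
def InDeg (γ : ℂ) (x : SV Γ s) : Prop :=
  (∀ p : Γ × ℕ, (p.1 : ℂ) ≠ γ → x (Sum.inl p) = 0) ∧
  (∀ q : {μ : ℂ // μ - s ∈ Γ} × ℕ, (q.1 : ℂ) ≠ γ → x (Sum.inr q) = 0)

/-- The group `Ω`, generated by `Γ ∪ {s}`. -/
def Omega : AddSubgroup ℂ := Γ ⊔ AddSubgroup.closure {s}

theorem gamma_mem_Omega {α : ℂ} (hα : α ∈ Γ) : α ∈ Omega Γ s :=
  AddSubgroup.mem_sup_left hα

theorem s_mem_Omega : s ∈ Omega Γ s :=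
  AddSubgroup.mem_sup_right (AddSubgroup.subset_closure (Set.mem_singleton s))

theorem smu_mem_Omega {μ : ℂ} (hμ : μ - s ∈ Γ) : μ ∈ Omega Γ s := by
  have h := add_mem (gamma_mem_Omega Γ s hμ) (s_mem_Omega Γ s)
  rwa [sub_add_cancel] at h

/-- The `Ω`-degree of a basis index. -/
def idxDeg : Idx Γ s → ℂ
  | Sum.inl p => (p.1 : ℂ)
  | Sum.inr q => (q.1 : ℂ)

theorem idxDeg_mem (a : Idx Γ s) : idxDeg Γ s a ∈ Omega Γ s := by
  cases a with
  | inl p => exact gamma_mem_Omega Γ s p.1.2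
  | inr q => exact smu_mem_Omega Γ s q.1.2

/-- The derivation `D_φ` attached to a group homomorphism `φ : (Ω,+) → (ℂ,+)`:
`D_φ (L_{α,i}) = φ(α) • L_{α,i}` and `D_φ (G_{μ,j}) = φ(μ) • G_{μ,j}`. -/
def Dphi (φ : ↥(Omega Γ s) →+ ℂ) : SV Γ s →ₗ[ℂ] SV Γ s :=
  Finsupp.lsum ℂ fun a => φ ⟨idxDeg Γ s a, idxDeg_mem Γ s a⟩ • Finsupp.lsingle a

/-- `D` is a parity-`0` (even) derivation of `SV[Γ,s]`. -/
def IsEvenDer (hs : 2 * s ∈ Γ) (D : SV Γ s →ₗ[ℂ] SV Γ s) : Prop :=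
  (∀ x, IsEvenElt Γ s x → IsEvenElt Γ s (D x)) ∧
  (∀ x, IsOddElt Γ s x → IsOddElt Γ s (D x)) ∧
  (∀ x y, IsHomog Γ s x →
    D (bkt Γ s hs x y) = bkt Γ s hs (D x) y + bkt Γ s hs x (D y))

/-- `D` is a parity-`1` (odd) derivation of `SV[Γ,s]`. -/
def IsOddDer (hs : 2 * s ∈ Γ) (D : SV Γ s →ₗ[ℂ] SV Γ s) : Prop :=
  (∀ x, IsEvenElt Γ s x → IsOddElt Γ s (D x)) ∧
  (∀ x, IsOddElt Γ s x → IsEvenElt Γ s (D x)) ∧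
  (∀ x y, IsEvenElt Γ s x →
    D (bkt Γ s hs x y) = bkt Γ s hs (D x) y + bkt Γ s hs x (D y)) ∧
  (∀ x y, IsOddElt Γ s x →
    D (bkt Γ s hs x y) = bkt Γ s hs (D x) y - bkt Γ s hs x (D y))

/-- `D` is a derivation of `SV[Γ,s]`: a sum of an even and an odd derivation. -/
def IsDer (hs : 2 * s ∈ Γ) (D : SV Γ s →ₗ[ℂ] SV Γ s) : Prop :=
  ∃ D0 D1, IsEvenDer Γ s hs D0 ∧ IsOddDer Γ s hs D1 ∧ D = D0 + D1

/-- `D` has degree `γ`: it maps `SV_δ` into `SV_{δ+γ}` for every `δ`. -/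
def HasDeg (γ : ℂ) (D : SV Γ s →ₗ[ℂ] SV Γ s) : Prop :=
  ∀ (δ : ℂ) (x : SV Γ s), InDeg Γ s δ x → InDeg Γ s (δ + γ) (D x)

/-- `ψ` is a 2-cocycle on `SV[Γ,s]` (super skew-symmetry and super Jacobi identity,
with the sign `(-1)^{|x||y|}` spelled out according to the parities). -/
def IsCocycle (hs : 2 * s ∈ Γ) (ψ : SV Γ s →ₗ[ℂ] SV Γ s →ₗ[ℂ] ℂ) : Prop :=
  (∀ x y, IsHomog Γ s x → IsHomog Γ s y → (IsEvenElt Γ s x ∨ IsEvenElt Γ s y) →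
    ψ x y = - ψ y x) ∧
  (∀ x y, IsOddElt Γ s x → IsOddElt Γ s y → ψ x y = ψ y x) ∧
  (∀ x y z, IsHomog Γ s x → IsHomog Γ s y → (IsEvenElt Γ s x ∨ IsEvenElt Γ s y) →
    ψ x (bkt Γ s hs y z) = ψ (bkt Γ s hs x y) z + ψ y (bkt Γ s hs x z)) ∧
  (∀ x y z, IsOddElt Γ s x → IsOddElt Γ s y →
    ψ x (bkt Γ s hs y z) = ψ (bkt Γ s hs x y) z - ψ y (bkt Γ s hs x z))

/-- `f : SV → ℂ` satisfies the recursive formulas associated to the 2-cocycle `ψ`. -/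
def IsAssocMap (hs : 2 * s ∈ Γ) (ψ : SV Γ s →ₗ[ℂ] SV Γ s →ₗ[ℂ] ℂ)
    (f : SV Γ s →ₗ[ℂ] ℂ) : Prop :=
  (∀ i : ℕ, f (lgen Γ s 0 (zero_mem Γ) i)
      = ψ (lgen Γ s 0 (zero_mem Γ) 0) (lgen Γ s 0 (zero_mem Γ) (i + 1)) / (i + 1)) ∧
  (∀ (α : ℂ) (hα : α ∈ Γ) (i : ℕ), α ≠ 0 →
    f (lgen Γ s α hα i)
      = (ψ (lgen Γ s 0 (zero_mem Γ) 0) (lgen Γ s α hα i) - (i : ℂ) * f (lgen Γ s α hα (i - 1))) / α) ∧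
  (∀ (h0 : (0 : ℂ) - s ∈ Γ) (i : ℕ),
    f (ggen Γ s 0 h0 i) = (2 / (2 * (i : ℂ) - 1)) * ψ (lgen Γ s 0 (zero_mem Γ) 1) (ggen Γ s 0 h0 i)) ∧
  (∀ (μ : ℂ) (hμ : μ - s ∈ Γ) (i : ℕ), μ ≠ 0 →
    f (ggen Γ s μ hμ i)
      = (ψ (lgen Γ s 0 (zero_mem Γ) 0) (ggen Γ s μ hμ i) - (i : ℂ) * f (ggen Γ s μ hμ (i - 1))) / μ)

section Aux

lemma bkt_single (hs : 2 * s ∈ Γ) (a b : Idx Γ s) :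
    bkt Γ s hs (Finsupp.single a 1) (Finsupp.single b 1) = bk Γ s hs a b := by
  classical
  unfold bkt
  rw [Finsupp.sum_single_index, Finsupp.sum_single_index] <;> simp [Finsupp.sum_single_index]

lemma bkt_GG (hs : 2 * s ∈ Γ) (μ : ℂ) (hμ : μ - s ∈ Γ) (i : ℕ)
    (ν : ℂ) (hν : ν - s ∈ Γ) (j : ℕ) :
    bkt Γ s hs (ggen Γ s μ hμ i) (ggen Γ s ν hν j)
      = (2 : ℂ) • lgen Γ s (μ + ν) (memGG Γ s hs hμ hν) (i + j) := by
  rw [ggen, ggen, bkt_single]; rfl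

lemma lgen_congr {α β : ℂ} (h : α = β) (hα : α ∈ Γ) (hβ : β ∈ Γ) (i j : ℕ) (hij : i = j) :
    lgen Γ s α hα i = lgen Γ s β hβ j := by subst h; subst hij; rfl

lemma ggen_congr {α β : ℂ} (h : α = β) (hα : α - s ∈ Γ) (hβ : β - s ∈ Γ) (i j : ℕ) (hij : i = j) :
    ggen Γ s α hα i = ggen Γ s β hβ j := by subst h; subst hij; rfl

lemma bkt_L00_G (hs : 2 * s ∈ Γ) (μ : ℂ) (hμ : μ - s ∈ Γ) (i : ℕ) :
    bkt Γ s hs (lgen Γ s 0 (zero_mem Γ) 0) (ggen Γ s μ hμ i)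
      = μ • ggen Γ s μ hμ i + (i : ℂ) • ggen Γ s μ hμ (i - 1) := by
  rw [lgen, ggen, bkt_single]
  show (μ - 0 / 2) • ggen Γ s (0 + μ) _ (0 + i) + ((i : ℂ) - (0 : ℕ) / 2) • ggen Γ s (0 + μ) _ (0 + i - 1) = _
  rw [ggen_congr Γ s (zero_add μ) _ hμ (0 + i) i (zero_add i),
      ggen_congr Γ s (zero_add μ) _ hμ (0 + i - 1) (i - 1) (by omega)]
  simp only [Nat.cast_zero, zero_div, sub_zero]
  rfl

lemma bkt_L00_L (hs : 2 * s ∈ Γ) (β : ℂ) (hβ : β ∈ Γ) (k : ℕ) :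
    bkt Γ s hs (lgen Γ s 0 (zero_mem Γ) 0) (lgen Γ s β hβ k)
      = β • lgen Γ s β hβ k + (k : ℂ) • lgen Γ s β hβ (k - 1) := by
  rw [lgen, lgen, bkt_single]
  show (β - 0) • lgen Γ s (0 + β) _ (0 + k) + ((k : ℂ) - (0 : ℕ)) • lgen Γ s (0 + β) _ (0 + k - 1) = _
  rw [lgen_congr Γ s (zero_add β) _ hβ (0 + k) k (zero_add k),
      lgen_congr Γ s (zero_add β) _ hβ (0 + k - 1) (k - 1) (by omega)]
  simp only [Nat.cast_zero, sub_zero]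
  rfl

lemma lgen_even (α : ℂ) (hα : α ∈ Γ) (i : ℕ) : IsEvenElt Γ s (lgen Γ s α hα i) := by
  intro b; simp [lgen, Finsupp.single_apply]

lemma ggen_odd (μ : ℂ) (hμ : μ - s ∈ Γ) (i : ℕ) : IsOddElt Γ s (ggen Γ s μ hμ i) := by
  intro a; simp [ggen, Finsupp.single_apply]

end Aux
/-- For a 2-cocycle `ψ` with associated map `f`, the 2-cocycle `φ = ψ - ψ_f`
vanishes on pairs `(G_{μ,i}, G_{ν,j})`. -/
theorem cocycle_GG (Γ : AddSubgroup ℂ) (hΓ : ∀ n : ℤ, (n : ℂ) ∈ Γ)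
    (s : ℂ) (hs : 2 * s ∈ Γ) :
    ∀ ψ : SV Γ s →ₗ[ℂ] SV Γ s →ₗ[ℂ] ℂ, IsCocycle Γ s hs ψ →
      ∀ f : SV Γ s →ₗ[ℂ] ℂ, IsAssocMap Γ s hs ψ f →
        ∀ (μ : ℂ) (hμ : μ - s ∈ Γ) (i : ℕ) (ν : ℂ) (hν : ν - s ∈ Γ) (j : ℕ),
          ψ (ggen Γ s μ hμ i) (ggen Γ s ν hν j)
            - f (bkt Γ s hs (ggen Γ s μ hμ i) (ggen Γ s ν hν j)) = 0 := by
  intro ψ hψ f hf μ hμ i ν hν j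
  obtain ⟨hskew, hsym, hjac, hjac'⟩ := hψ
  obtain ⟨hf1, hf2, hf3, hf4⟩ := hf
  -- Step 1: `ψ(L_{0,0}, L_{β,k}) = f([L_{0,0}, L_{β,k}])`.
  have hL00 : ∀ (β : ℂ) (hβ : β ∈ Γ) (k : ℕ),
      ψ (lgen Γ s 0 (zero_mem Γ) 0) (lgen Γ s β hβ k)
        = β * f (lgen Γ s β hβ k) + (k : ℂ) * f (lgen Γ s β hβ (k - 1)) := by
    intro β hβ k
    by_cases hβ0 : β = 0
    · subst hβ0
      rw [lgen_congr Γ s rfl hβ (zero_mem Γ) k k rfl,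
          lgen_congr Γ s rfl hβ (zero_mem Γ) (k - 1) (k - 1) rfl]
      cases k with
      | zero =>
        have h0 := hskew (lgen Γ s 0 (zero_mem Γ) 0) (lgen Γ s 0 (zero_mem Γ) 0)
          (Or.inl (lgen_even Γ s _ _ _)) (Or.inl (lgen_even Γ s _ _ _))
          (Or.inl (lgen_even Γ s _ _ _))
        push_cast
        linear_combination h0 / 2
      | succ k =>
        have h1 := hf1 k
        have hne : ((k : ℂ) + 1) ≠ 0 := by exact_mod_cast Nat.succ_ne_zero k
        rw [eq_div_iff hne] at h1
        simp only [Nat.add_sub_cancel]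
        push_cast
        linear_combination -h1
    · have h2 := hf2 β hβ k hβ0
      rw [eq_div_iff hβ0] at h2
      linear_combination -h2
  -- reduce to the clean statement
  suffices h : ∀ a b : ℕ, ψ (ggen Γ s μ hμ a) (ggen Γ s ν hν b)
      = 2 * f (lgen Γ s (μ + ν) (memGG Γ s hs hμ hν) (a + b)) by
    rw [bkt_GG, map_smul, smul_eq_mul, h i j, sub_self]
  -- Step 2: the key recursion (*)
  have star : ∀ a b : ℕ,
      (μ + ν) * (ψ (ggen Γ s μ hμ a) (ggen Γ s ν hν b)
          - 2 * f (lgen Γ s (μ + ν) (memGG Γ s hs hμ hν) (a + b)))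
        + (a : ℂ) * (ψ (ggen Γ s μ hμ (a - 1)) (ggen Γ s ν hν b)
          - 2 * f (lgen Γ s (μ + ν) (memGG Γ s hs hμ hν) (a - 1 + b)))
        + (b : ℂ) * (ψ (ggen Γ s μ hμ a) (ggen Γ s ν hν (b - 1))
          - 2 * f (lgen Γ s (μ + ν) (memGG Γ s hs hμ hν) (a + (b - 1)))) = 0 := by
    intro a b
    have H := hjac (lgen Γ s 0 (zero_mem Γ) 0) (ggen Γ s μ hμ a) (ggen Γ s ν hν b)
      (Or.inl (lgen_even Γ s _ _ _)) (Or.inr (ggen_odd Γ s _ _ _))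
      (Or.inl (lgen_even Γ s _ _ _))
    rw [bkt_GG, bkt_L00_G Γ s hs μ hμ a, bkt_L00_G Γ s hs ν hν b] at H
    simp only [map_add, map_smul, LinearMap.add_apply, LinearMap.smul_apply,
      smul_eq_mul] at H
    rw [hL00 (μ + ν) (memGG Γ s hs hμ hν) (a + b)] at H
    rcases a with _ | a <;> rcases b with _ | b <;>
      simp only [Nat.add_sub_cancel, Nat.zero_sub, Nat.sub_zero, add_zero, zero_add,
        Nat.cast_zero, zero_mul, mul_zero] at H ⊢
    · push_cast at H ⊢; linear_combination -H
    · push_cast at H ⊢; linear_combination -H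
    · push_cast at H ⊢; linear_combination -H
    · rw [show a + 1 + (b + 1) - 1 = a + (b + 1) from by omega] at H
      rw [show a + 1 + b = a + (b + 1) from by omega]
      push_cast at H ⊢
      linear_combination -H
  by_cases hz : μ + ν = 0
  · -- degenerate case: induction on the second index
    have key : ∀ b a : ℕ, ψ (ggen Γ s μ hμ a) (ggen Γ s ν hν b)
        = 2 * f (lgen Γ s (μ + ν) (memGG Γ s hs hμ hν) (a + b)) := by
      intro b
      induction b with
      | zero =>
        intro a
        have h := star (a + 1) 0
        simp only [Nat.add_sub_cancel, Nat.cast_zero, zero_mul, add_zero] at h ⊢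
        have h2 : ((a : ℂ) + 1) * (ψ (ggen Γ s μ hμ a) (ggen Γ s ν hν 0)
            - 2 * f (lgen Γ s (μ + ν) (memGG Γ s hs hμ hν) a)) = 0 := by
          push_cast at h
          linear_combination h - (ψ (ggen Γ s μ hμ (a + 1)) (ggen Γ s ν hν 0)
            - 2 * f (lgen Γ s (μ + ν) (memGG Γ s hs hμ hν) (a + 1))) * hz
        rcases mul_eq_zero.mp h2 with h3 | h3
        · exact absurd h3 (by exact_mod_cast Nat.succ_ne_zero a)
        · linear_combination h3
      | succ b ih =>
        intro a
        have h := star (a + 1) (b + 1)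
        simp only [Nat.add_sub_cancel] at h
        have ih1 := ih (a + 1)
        have h2 : ((a : ℂ) + 1) * (ψ (ggen Γ s μ hμ a) (ggen Γ s ν hν (b + 1))
            - 2 * f (lgen Γ s (μ + ν) (memGG Γ s hs hμ hν) (a + (b + 1)))) = 0 := by
          push_cast at h
          linear_combination h - ((b : ℂ) + 1) * ih1
            - (ψ (ggen Γ s μ hμ (a + 1)) (ggen Γ s ν hν (b + 1))
              - 2 * f (lgen Γ s (μ + ν) (memGG Γ s hs hμ hν) (a + 1 + (b + 1)))) * hz
        rcases mul_eq_zero.mp h2 with h3 | h3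
        · exact absurd h3 (by exact_mod_cast Nat.succ_ne_zero a)
        · linear_combination h3
    intro a b; exact key b a
  · -- generic case: strong induction on `a + b`
    have key : ∀ n a b : ℕ, a + b = n → ψ (ggen Γ s μ hμ a) (ggen Γ s ν hν b)
        = 2 * f (lgen Γ s (μ + ν) (memGG Γ s hs hμ hν) (a + b)) := by
      intro n
      induction n using Nat.strong_induction_on with
      | _ n ih =>
        intro a b hab
        have h := star a b
        have h1 : (a : ℂ) * (ψ (ggen Γ s μ hμ (a - 1)) (ggen Γ s ν hν b)
            - 2 * f (lgen Γ s (μ + ν) (memGG Γ s hs hμ hν) (a - 1 + b))) = 0 := by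
          rcases Nat.eq_zero_or_pos a with ha | ha
          · subst ha; simp
          · have := ih (a - 1 + b) (by omega) (a - 1) b rfl
            linear_combination (a : ℂ) * this
        have h2 : (b : ℂ) * (ψ (ggen Γ s μ hμ a) (ggen Γ s ν hν (b - 1))
            - 2 * f (lgen Γ s (μ + ν) (memGG Γ s hs hμ hν) (a + (b - 1)))) = 0 := by
          rcases Nat.eq_zero_or_pos b with hb | hb
          · subst hb; simp
          · have := ih (a + (b - 1)) (by omega) a (b - 1) rfl
            linear_combination (b : ℂ) * this
        have h3 : (μ + ν) * (ψ (ggen Γ s μ hμ a) (ggen Γ s ν hν b)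
            - 2 * f (lgen Γ s (μ + ν) (memGG Γ s hs hμ hν) (a + b))) = 0 := by
          linear_combination h - h1 - h2
        have h4 := (mul_eq_zero.mp h3).resolve_left hz
        linear_combination h4
    intro a b; exact key (a + b) a b rfl

end SVSuper
end
end

section
/- The second cohomology group of SV = SV[Γ,s] with coefficients in ℂ is trivial: every 2-cocycle ψ on SV is a 2-coboundary, i.e., there exists a ℂ-linear map f: SV → ℂ such that ψ(x,y) = f([x,y]) for all x, y ∈ SV. Equivalently, C²(SV,ℂ) = B²(SV,ℂ) and H²(SV,ℂ) = 0. -/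
/-!
`ad L_{0,0}` acts on `L_{γ,i}` and `G_{γ,i}` as `γ` plus the level-lowering `x_i ↦ i x_{i-1}`,
and is a derivation of the bracket. Choose `f` recursively in the level so that
`ψ(L_{0,0}, x) = f([L_{0,0}, x])` on every basis vector; at degree `0` and level `0` this needs
`ψ(L_{0,0}, x) = 0`, which the cocycle identity for `L_{0,0}, L_{0,1}, x` forces because
`L_{0,1}` acts on such `x` by a scalar `≠ 1`. Then `φ = ψ - ψ_f` vanishes on `L_{0,0}` in its
first slot, so the cocycle identity makes it `ad L_{0,0}`-invariant. On basis vectors `x_j, y_k`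
of degrees `δ, δ'` this reads
`(δ + δ') φ(x_j, y_k) + j φ(x_{j-1}, y_k) + k φ(x_j, y_{k-1}) = 0`, and induction on the levels
gives `φ = 0`.
-/

noncomputable section

namespace SVSuper

variable (Γ : AddSubgroup ℂ) (s : ℂ)

theorem eq_zero_of_recurrence {K : Type*} [Field K] [CharZero K] {δ : K} {c : ℕ → ℕ → K}
    (h : ∀ j k : ℕ, δ * c j k + j * c (j - 1) k + k * c j (k - 1) = 0) (j k : ℕ) :
    c j k = 0 := by
  have column (k : ℕ) (hprev : ∀ j, (k : K) * c j (k - 1) = 0) (j : ℕ) : c j k = 0 := by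
    by_cases hδ : δ = 0
    · have := h (j + 1) k
      simp only [hδ, hprev, zero_mul, zero_add, add_zero, Nat.add_sub_cancel, mul_eq_zero] at this
      exact this.resolve_left (Nat.cast_ne_zero.mpr j.succ_ne_zero)
    · induction j with
      | zero => simpa [hδ, hprev] using h 0 k
      | succ j ihj => simpa [ihj, hprev, hδ] using h (j + 1) k
  induction k generalizing j with
  | zero => exact column 0 (by simp) j
  | succ k ih => exact column (k + 1) (by simp [ih]) j

section Family

variable (Γ : AddSubgroup ℂ) (s : ℂ)

/-- `Sum.inl α` indexes the family `L_{α,•}`, `Sum.inr μ` the family `G_{μ,•}`. -/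
abbrev Family : Type := Γ ⊕ {μ : ℂ // μ - s ∈ Γ}

def lzero (i : ℕ) : SV Γ s := lgen Γ s 0 (zero_mem Γ) i

variable {Γ s}

def Family.deg : Family Γ s → ℂ
  | Sum.inl α => α
  | Sum.inr μ => μ

def idx (F : Family Γ s) (i : ℕ) : Idx Γ s := Equiv.sumProdDistrib _ _ _ (F, i)

def vec (F : Family Γ s) (i : ℕ) : SV Γ s := Finsupp.single (idx F i) 1

theorem vec_inl (α : Γ) (i : ℕ) : vec (Sum.inl α : Family Γ s) i = lgen Γ s α α.2 i := rfl

theorem vec_inr (μ : {μ : ℂ // μ - s ∈ Γ}) (i : ℕ) :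
    vec (Sum.inr μ : Family Γ s) i = ggen Γ s μ μ.2 i := rfl

theorem isHomog_vec (F : Family Γ s) (i : ℕ) : IsHomog Γ s (vec F i) := by
  rcases F with α | μ
  · exact Or.inl fun b => Finsupp.single_eq_of_ne (by simp [idx])
  · exact Or.inr fun a => Finsupp.single_eq_of_ne (by simp [idx])

theorem isEvenElt_lzero (i : ℕ) : IsEvenElt Γ s (lzero Γ s i) :=
  fun b => Finsupp.single_eq_of_ne (by simp)

end Family

section Bracket

variable {Γ : AddSubgroup ℂ} {s : ℂ} (hs : 2 * s ∈ Γ)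

def bracket : SV Γ s →ₗ[ℂ] SV Γ s →ₗ[ℂ] SV Γ s :=
  Finsupp.lsum ℂ fun a => LinearMap.toSpanSingleton ℂ _
    (Finsupp.lsum ℂ fun b => LinearMap.toSpanSingleton ℂ _ (bk Γ s hs a b))

theorem bkt_eq_bracket (x y : SV Γ s) : bkt Γ s hs x y = bracket hs x y := by
  simp [bkt, bracket, Finsupp.lsum_apply, Finsupp.smul_sum, mul_smul]

theorem bracket_single_single (a b : Idx Γ s) :
    bracket hs (Finsupp.single a 1) (Finsupp.single b 1) = bk Γ s hs a b := by
  simp [bracket]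

theorem bracket_lgen_lgen {α β : ℂ} (hα : α ∈ Γ) (hβ : β ∈ Γ) (i j : ℕ) :
    bracket hs (lgen Γ s α hα i) (lgen Γ s β hβ j) =
      (β - α) • lgen Γ s (α + β) (add_mem hα hβ) (i + j)
        + ((j : ℂ) - (i : ℂ)) • lgen Γ s (α + β) (add_mem hα hβ) (i + j - 1) :=
  bracket_single_single hs _ _

theorem bracket_lgen_ggen {α μ : ℂ} (hα : α ∈ Γ) (hμ : μ - s ∈ Γ) (i j : ℕ) :
    bracket hs (lgen Γ s α hα i) (ggen Γ s μ hμ j) =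
      (μ - α / 2) • ggen Γ s (α + μ) (memLG Γ s hα hμ) (i + j)
        + ((j : ℂ) - (i : ℂ) / 2) • ggen Γ s (α + μ) (memLG Γ s hα hμ) (i + j - 1) :=
  bracket_single_single hs _ _

theorem bracket_ggen_lgen {μ α : ℂ} (hμ : μ - s ∈ Γ) (hα : α ∈ Γ) (i j : ℕ) :
    bracket hs (ggen Γ s μ hμ i) (lgen Γ s α hα j) =
      -((μ - α / 2) • ggen Γ s (α + μ) (memLG Γ s hα hμ) (j + i)
        + ((i : ℂ) - (j : ℂ) / 2) • ggen Γ s (α + μ) (memLG Γ s hα hμ) (j + i - 1)) :=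
  bracket_single_single hs _ _

theorem bracket_ggen_ggen {μ ν : ℂ} (hμ : μ - s ∈ Γ) (hν : ν - s ∈ Γ) (i j : ℕ) :
    bracket hs (ggen Γ s μ hμ i) (ggen Γ s ν hν j) =
      (2 : ℂ) • lgen Γ s (μ + ν) (memGG Γ s hs hμ hν) (i + j) :=
  bracket_single_single hs _ _

theorem bracket_lzero_lgen {β : ℂ} (hβ : β ∈ Γ) (j : ℕ) :
    bracket hs (lzero Γ s 0) (lgen Γ s β hβ j) =
      β • lgen Γ s β hβ j + (j : ℂ) • lgen Γ s β hβ (j - 1) := by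
  simp [lzero, bracket_lgen_lgen]

theorem bracket_lzero_ggen {μ : ℂ} (hμ : μ - s ∈ Γ) (j : ℕ) :
    bracket hs (lzero Γ s 0) (ggen Γ s μ hμ j) =
      μ • ggen Γ s μ hμ j + (j : ℂ) • ggen Γ s μ hμ (j - 1) := by
  simp [lzero, bracket_lgen_ggen]

theorem bracket_lzero_vec (F : Family Γ s) (i : ℕ) :
    bracket hs (lzero Γ s 0) (vec F i) = F.deg • vec F i + (i : ℂ) • vec F (i - 1) := by
  rcases F with ⟨β, hβ⟩ | ⟨μ, hμ⟩
  · exact bracket_lzero_lgen hs hβ i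
  · exact bracket_lzero_ggen hs hμ i

theorem bracket_lzero_bracket (F G : Family Γ s) (i j : ℕ) :
    bracket hs (lzero Γ s 0) (bracket hs (vec F i) (vec G j)) =
      bracket hs (bracket hs (lzero Γ s 0) (vec F i)) (vec G j)
        + bracket hs (vec F i) (bracket hs (lzero Γ s 0) (vec G j)) := by
  rcases F with ⟨α, hα⟩ | ⟨μ, hμ⟩ <;> rcases G with ⟨β, hβ⟩ | ⟨ν, hν⟩ <;>
  · rcases i with _ | i <;> rcases j with _ | j <;>
    simp only [vec_inl, vec_inr, bracket_lgen_lgen, bracket_lgen_ggen, bracket_ggen_lgen,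
      bracket_ggen_ggen, bracket_lzero_lgen, bracket_lzero_ggen, map_add, map_smul, map_neg,
      LinearMap.add_apply, LinearMap.smul_apply, Nat.add_sub_cancel, Nat.add_succ_sub_one,
      Nat.succ_add_sub_one, Nat.zero_sub, zero_add, add_zero] <;>
    -- bring the levels `i + j + 1`, `j + 1 + i`, ... of the basis vectors to one normal form
    (try simp only [Nat.add_comm, Nat.add_left_comm]) <;>
    module

theorem exists_bracket_lzero_one_vec_zero {F : Family Γ s} (hF : F.deg = 0) :
    ∃ c : ℂ, c ≠ 1 ∧ bracket hs (lzero Γ s 1) (vec F 0) = c • vec F 0 := by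
  rcases F with ⟨α, hα⟩ | ⟨μ, hμ⟩ <;> obtain rfl : _ = (0 : ℂ) := hF
  · exact ⟨-1, by norm_num, by simp [lzero, vec_inl, bracket_lgen_lgen]⟩
  · exact ⟨-2⁻¹, by norm_num, by simp [lzero, vec_inr, bracket_lgen_ggen, neg_smul]⟩

theorem eq_zero_of_lzero_invariant {φ : SV Γ s →ₗ[ℂ] SV Γ s →ₗ[ℂ] ℂ}
    (h : ∀ (F G : Family Γ s) (i j : ℕ),
      φ (bracket hs (lzero Γ s 0) (vec F i)) (vec G j)
        + φ (vec F i) (bracket hs (lzero Γ s 0) (vec G j)) = 0) :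
    φ = 0 := by
  have hvec (F G : Family Γ s) : ∀ i j, φ (vec F i) (vec G j) = 0 := by
    refine eq_zero_of_recurrence (δ := F.deg + G.deg) fun i j => ?_
    have := h F G i j
    simp only [bracket_lzero_vec, map_add, map_smul, LinearMap.add_apply, LinearMap.smul_apply,
      smul_eq_mul] at this
    linear_combination this
  ext a b
  obtain ⟨⟨F, i⟩, rfl⟩ := (Equiv.sumProdDistrib _ _ _).surjective a
  obtain ⟨⟨G, j⟩, rfl⟩ := (Equiv.sumProdDistrib _ _ _).surjective b
  exact hvec F G i j

end Bracket

section Cocycle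

variable {Γ : AddSubgroup ℂ} {s : ℂ} {hs : 2 * s ∈ Γ}
  {ψ : SV Γ s →ₗ[ℂ] SV Γ s →ₗ[ℂ] ℂ}

theorem IsCocycle.jacobi_of_isEvenElt (hψ : IsCocycle Γ s hs ψ) {x y : SV Γ s}
    (hx : IsEvenElt Γ s x) (hy : IsHomog Γ s y) (z : SV Γ s) :
    ψ x (bracket hs y z) = ψ (bracket hs x y) z + ψ y (bracket hs x z) := by
  simpa only [bkt_eq_bracket] using hψ.2.2.1 x y z (Or.inl hx) hy (Or.inl hx)

theorem IsCocycle.lzero_vec_zero (hψ : IsCocycle Γ s hs ψ) {F : Family Γ s} (hF : F.deg = 0) :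
    ψ (lzero Γ s 0) (vec F 0) = 0 := by
  obtain ⟨c, hc, hbr⟩ := exists_bracket_lzero_one_vec_zero hs hF
  have hjac := hψ.jacobi_of_isEvenElt (isEvenElt_lzero 0) (Or.inl (isEvenElt_lzero 1)) (vec F 0)
  have hl : bracket hs (lzero Γ s 0) (lzero Γ s 1) = lzero Γ s 0 := by
    simpa [lzero] using bracket_lzero_lgen hs (zero_mem Γ) 1
  rw [hbr, hl, bracket_lzero_vec, hF] at hjac
  simp only [map_smul, smul_eq_mul, zero_smul, Nat.cast_zero, zero_tsub, add_zero, map_zero] at hjac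
  have : (c - 1) * ψ (lzero Γ s 0) (vec F 0) = 0 := by linear_combination hjac
  exact (mul_eq_zero.mp this).resolve_left (sub_ne_zero.mpr hc)

variable (ψ)

/-- Solves `ψ(L_{0,0}, x_i) = δ f(x_i) + i f(x_{i-1})` for `f(x_i)`, where `δ = F.deg ≠ 0`. -/
def primitiveCoeffOfDegNeZero (F : Family Γ s) : ℕ → ℂ
  | 0 => ψ (lzero Γ s 0) (vec F 0) / F.deg
  | i + 1 => (ψ (lzero Γ s 0) (vec F (i + 1)) - (i + 1) * primitiveCoeffOfDegNeZero F i) / F.deg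

/-- On a family of degree `0`, `[L_{0,0}, x_{i+1}] = (i + 1) x_i`. -/
def primitiveCoeff (F : Family Γ s) (i : ℕ) : ℂ :=
  if F.deg = 0 then ψ (lzero Γ s 0) (vec F (i + 1)) / (i + 1)
  else primitiveCoeffOfDegNeZero ψ F i

def primitive : SV Γ s →ₗ[ℂ] ℂ :=
  Finsupp.linearCombination ℂ fun a =>
    Function.uncurry (primitiveCoeff ψ) ((Equiv.sumProdDistrib _ _ _).symm a)

theorem primitive_vec (F : Family Γ s) (i : ℕ) :
    primitive ψ (vec F i) = primitiveCoeff ψ F i := by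
  simp [primitive, vec, idx]

variable {ψ}

theorem IsCocycle.lzero_vec_eq_primitive (hψ : IsCocycle Γ s hs ψ) (F : Family Γ s) (i : ℕ) :
    ψ (lzero Γ s 0) (vec F i) = primitive ψ (bracket hs (lzero Γ s 0) (vec F i)) := by
  simp only [bracket_lzero_vec, map_add, map_smul, primitive_vec, primitiveCoeff, smul_eq_mul]
  by_cases hF : F.deg = 0
  · rcases i with _ | i
    · simpa [hF] using hψ.lzero_vec_zero hF
    · simp only [hF, ↓reduceIte, Nat.cast_add, Nat.cast_one, zero_mul, add_tsub_cancel_right,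
        zero_add]
      field_simp
  · rcases i with _ | i
    · simp only [hF, ↓reduceIte, primitiveCoeffOfDegNeZero, Nat.cast_zero, zero_tsub, zero_mul,
        add_zero]
      field_simp
    · simp only [hF, ↓reduceIte, primitiveCoeffOfDegNeZero, Nat.cast_add, Nat.cast_one,
        add_tsub_cancel_right]
      field_simp
      ring

theorem IsCocycle.lzero_eq_primitive_comp (hψ : IsCocycle Γ s hs ψ) :
    ψ (lzero Γ s 0) = primitive ψ ∘ₗ bracket hs (lzero Γ s 0) := by
  ext a
  obtain ⟨⟨F, i⟩, rfl⟩ := (Equiv.sumProdDistrib _ _ _).surjective a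
  exact hψ.lzero_vec_eq_primitive F i

theorem IsCocycle.sub_primitive_invariant (hψ : IsCocycle Γ s hs ψ) (F G : Family Γ s)
    (i j : ℕ) :
    (ψ - (bracket hs).compr₂ (primitive ψ)) (bracket hs (lzero Γ s 0) (vec F i)) (vec G j)
      + (ψ - (bracket hs).compr₂ (primitive ψ)) (vec F i) (bracket hs (lzero Γ s 0) (vec G j))
      = 0 := by
  have hjac := hψ.jacobi_of_isEvenElt (isEvenElt_lzero 0) (isHomog_vec F i) (vec G j)
  have hder := bracket_lzero_bracket hs F G i j
  have hnorm := LinearMap.congr_fun hψ.lzero_eq_primitive_comp (bracket hs (vec F i) (vec G j))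
  rw [hjac, LinearMap.comp_apply, hder, map_add] at hnorm
  simp only [LinearMap.sub_apply, LinearMap.compr₂_apply]
  linear_combination hnorm

end Cocycle

theorem second_cohomology_trivial_general (Γ : AddSubgroup ℂ)
    (s : ℂ) (hs : 2 * s ∈ Γ) :
    ∀ ψ : SV Γ s →ₗ[ℂ] SV Γ s →ₗ[ℂ] ℂ, IsCocycle Γ s hs ψ →
      ∃ f : SV Γ s →ₗ[ℂ] ℂ, ∀ x y : SV Γ s, ψ x y = f (bkt Γ s hs x y) := by
  intro ψ hψ
  refine ⟨primitive ψ, fun x y => ?_⟩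
  have hφ := LinearMap.congr_fun₂ (eq_zero_of_lzero_invariant hs hψ.sub_primitive_invariant) x y
  simpa [sub_eq_zero, bkt_eq_bracket] using hφ

/-- `H²(SV,ℂ) = 0`: every 2-cocycle on `SV[Γ,s]` is a 2-coboundary. -/
theorem second_cohomology_trivial (Γ : AddSubgroup ℂ) (hΓ : ∀ n : ℤ, (n : ℂ) ∈ Γ)
    (s : ℂ) (hs : 2 * s ∈ Γ) :
    ∀ ψ : SV Γ s →ₗ[ℂ] SV Γ s →ₗ[ℂ] ℂ, IsCocycle Γ s hs ψ →
      ∃ f : SV Γ s →ₗ[ℂ] ℂ, ∀ x y : SV Γ s, ψ x y = f (bkt Γ s hs x y) :=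
  second_cohomology_trivial_general Γ s hs

end SVSuper
end
end
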